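/- Let A = {0,1,2} and f : A³ → A with f(x,0,y) = 1 iff x=1 or y=1 (else 0), f(x,1,y) = 2 iff x=2 or y=2 (else 1), f(x,2,y) = 0 iff x=1 or y=1 (else 2). Define for u ∈ A* the sequence u⁽⁰⁾ = u2 and u⁽ⁿ⁺¹⁾ = f(1 u⁽ⁿ⁾ 0), where f is extended to words (each u⁽ⁿ⁾ has length |u|+1). Then there exists m such that u⁽ⁿ⁾ = 1^{|u|+1} for all n ≥ m. -/
import Mathlib

/-- The local rule of the sensitive ν-CA example on `A = {0,1,2}`. -/
def fRule16 (x y z : Fin 3) : Fin 3 :=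
  if y = 0 then (if x = 1 ∨ z = 1 then 1 else 0)
  else if y = 1 then (if x = 2 ∨ z = 2 then 2 else 1)
  else (if x = 1 ∨ z = 1 then 0 else 2)

private lemma fr_mono : ∀ x y z : Fin 3, fRule16 x y z = y ∨ fRule16 x y z = y + 1 := by decide

private lemma fr_fix : ∀ y z : Fin 3, fRule16 1 y z = y → y = 1 := by decide

private lemma fr_wit : ∀ x z : Fin 3, fRule16 x 1 z = 2 → x = 2 ∨ z = 2 := by decide

private lemma fr_12 : ∀ z : Fin 3, fRule16 1 2 z = 0 := by decide

private lemma fr01 : ∀ x : Fin 3, fRule16 x 0 1 = 1 := by decide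

private lemma fr_10 : ∀ z : Fin 3, fRule16 1 0 z = 1 := by decide

private lemma fr_21 : ∀ z : Fin 3, fRule16 2 1 z = 2 := by decide

private lemma fr_x12 : ∀ x : Fin 3, fRule16 x 1 2 = 2 := by decide

private lemma fr_x21 : ∀ x : Fin 3, fRule16 x 2 1 = 0 := by decide

private lemma fin3_cases : ∀ a : Fin 3, a = 0 ∨ a = 1 ∨ a = 2 := by decide

private lemma fin3_pred2 : ∀ a : Fin 3, a + 1 = 2 → a = 1 := by decide

private lemma fin3_pred0 : ∀ a : Fin 3, a + 1 = 0 → a = 2 := by decide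

private lemma fin3_ne_succ : ∀ a : Fin 3, a ≠ a + 1 := by decide

private lemma fin3_all : ∀ a c : Fin 3, c = a ∨ c = a + 1 ∨ c = a + 1 + 1 := by decide

/-- For any word `u` of length `l`, the sequence of words `u⁽⁰⁾ = u2`,
`u⁽ⁿ⁺¹⁾ = f(1 u⁽ⁿ⁾ 0)` (each of length `l+1`, indices `0,…,l`) is ultimately
constantly equal to `1^{l+1}`. -/
theorem stmt_16 (l : ℕ) (u : ℕ → Fin 3)
    (v : ℕ → ℕ → Fin 3)
    (hv0 : ∀ i : ℕ, i ≤ l → v 0 i = if i < l then u i else 2)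
    (hvs : ∀ (n : ℕ) (i : ℕ), i ≤ l →
      v (n + 1) i =
        fRule16 (if i = 0 then 1 else v n (i - 1)) (v n i)
          (if i = l then 0 else v n (i + 1))) :
    ∃ m : ℕ, ∀ n ≥ m, ∀ i ≤ l, v n i = 1 := by
  classical
  -- one-step determinism
  have hstep : ∀ m n : ℕ, (∀ j, j ≤ l → v m j = v n j) →
      ∀ j, j ≤ l → v (m+1) j = v (n+1) j := by
    intro m n h j hj
    rw [hvs m j hj, hvs n j hj]
    have e1 : (if j = 0 then (1 : Fin 3) else v m (j-1)) =
        (if j = 0 then 1 else v n (j-1)) := by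
      by_cases hj0 : j = 0
      · simp [hj0]
      · simp only [if_neg hj0]; exact h (j-1) (by omega)
    have e2 : v m j = v n j := h j hj
    have e3 : (if j = l then (0 : Fin 3) else v m (j+1)) =
        (if j = l then 0 else v n (j+1)) := by
      by_cases hjl : j = l
      · simp [hjl]
      · simp only [if_neg hjl]; exact h (j+1) (by omega)
    rw [e1, e2, e3]
  -- cells only increment (mod 3)
  have incr : ∀ (n : ℕ) (i : ℕ), i ≤ l →
      v (n+1) i = v n i ∨ v (n+1) i = v n i + 1 := by
    intro n i hi
    rw [hvs n i hi]
    exact fr_mono _ _ _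
  -- main argument, given a repetition of states
  have key : ∀ N M : ℕ, N < M → (∀ j, j ≤ l → v N j = v M j) →
      ∃ m : ℕ, ∀ n ≥ m, ∀ i ≤ l, v n i = 1 := by
    intro N M hNM hSeq0
    set p := M - N with hp_def
    have hp : 1 ≤ p := by omega
    have hSeq : ∀ j, j ≤ l → v N j = v (N + p) j := by
      intro j hj
      have : N + p = M := by omega
      rw [this]; exact hSeq0 j hj
    have per0 : ∀ k : ℕ, ∀ j, j ≤ l → v (N + k) j = v (N + p + k) j := by
      intro k
      induction k with
      | zero => simpa using hSeq
      | succ k ih =>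
        intro j hj
        have h2 := hstep (N+k) (N+p+k) ih j hj
        rw [show N+(k+1) = (N+k)+1 by omega, show N+p+(k+1) = (N+p+k)+1 by omega]
        exact h2
    have perShift : ∀ s : ℕ, N ≤ s → ∀ j, j ≤ l → v s j = v (s + p) j := by
      intro s hs j hj
      have h := per0 (s - N) j hj
      rw [show N + (s - N) = s by omega, show N + p + (s - N) = s + p by omega] at h
      exact h
    have perMul : ∀ s : ℕ, N ≤ s → ∀ q : ℕ, ∀ j, j ≤ l → v s j = v (s + q * p) j := by
      intro s hs q j hj
      induction q with
      | zero => simp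
      | succ q ih =>
        rw [show s + (q+1) * p = (s + q * p) + p by ring]
        exact ih.trans (perShift (s + q * p) (by omega) j hj)
    by_cases hF : ∀ i, i ≤ l → ∀ n, N ≤ n → v (n+1) i = v n i
    · -- all cells frozen: fixed point, show it is all ones
      have hconst : ∀ n, N ≤ n → ∀ j, j ≤ l → v n j = v N j := by
        intro n hn
        induction n, hn using Nat.le_induction with
        | base => intro j _; rfl
        | succ n hn ih =>
          intro j hj
          rw [hF j hj n hn]
          exact ih j hj
      have all1 : ∀ i, i ≤ l → v N i = 1 := by
        intro i
        induction i with
        | zero =>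
          intro h0
          have h := hvs N 0 h0
          rw [if_pos rfl, hF 0 h0 N le_rfl] at h
          exact fr_fix _ _ h.symm
        | succ k ih =>
          intro hk1
          have hk : k ≤ l := by omega
          have hx := ih hk
          have h := hvs N (k+1) hk1
          rw [if_neg (Nat.succ_ne_zero k), hF (k+1) hk1 N le_rfl] at h
          rw [show k+1-1 = k by omega, hx] at h
          exact fr_fix _ _ h.symm
      exact ⟨N, fun n hn i hi => by rw [hconst n hn i hi]; exact all1 i hi⟩
    · -- some cell changes after N : derive a contradiction
      exfalso
      push_neg at hF
      obtain ⟨i₀, hi₀l, n₁₀, hn₁₀, hne₁₀⟩ := hF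
      -- a non-frozen cell visits every value in every window of length 2p+1
      have visMain : ∀ i, i ≤ l → (∃ n, N ≤ n ∧ v (n+1) i ≠ v n i) →
          ∀ c : Fin 3, ∀ t, N ≤ t → ∃ s, t ≤ s ∧ s ≤ t + 2 * p ∧ v s i = c := by
        intro i hi hNF c t ht
        obtain ⟨n₁, hn₁, hne₁⟩ := hNF
        -- canonical change point in [N, N+p)
        have hdm : p * ((n₁ - N) / p) + (n₁ - N) % p = n₁ - N := Nat.div_add_mod _ _
        set q := (n₁ - N) / p with hq_def
        set r := (n₁ - N) % p with hr_def
        have hrp : r < p := Nat.mod_lt _ (by omega)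
        set n₀ := N + r with hn₀_def
        have hcomm : q * p = p * q := Nat.mul_comm _ _
        have key1 : n₀ + q * p = n₁ := by omega
        have veq1 : v n₀ i = v n₁ i := by
          have h := perMul n₀ (by omega) q i hi
          rwa [key1] at h
        have veq2 : v (n₀+1) i = v (n₁+1) i := by
          have h := perMul (n₀+1) (by omega) q i hi
          rwa [show (n₀+1) + q * p = n₁ + 1 by omega] at h
        have hne₀ : v (n₀+1) i ≠ v n₀ i := by rw [veq1, veq2]; exact hne₁
        have ha1 : v (n₀+1) i = v n₀ i + 1 := by
          rcases incr n₀ i hi with h | h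
          · exact absurd h hne₀
          · exact h
        -- the value (v n₀ i) + 2 appears in [n₀, n₀+p]
        have h2w : ∃ s, n₀ ≤ s ∧ s ≤ n₀ + p ∧ v s i = v n₀ i + 1 + 1 := by
          by_contra hcon
          push_neg at hcon
          have chain : ∀ j : ℕ, 1 ≤ j → j ≤ p → v (n₀ + j) i = v n₀ i + 1 := by
            intro j
            induction j with
            | zero => omega
            | succ k ihk =>
              intro _ h2
              by_cases hk0 : k = 0
              · subst hk0; simpa using ha1
              · have hkv := ihk (by omega) (by omega)
                rcases incr (n₀ + k) i hi with h | h
                · rw [show n₀ + (k+1) = (n₀+k)+1 by omega, h, hkv]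
                · exfalso
                  have hv2 : v ((n₀+k)+1) i = v n₀ i + 1 + 1 := by rw [h, hkv]
                  exact hcon ((n₀+k)+1) (by omega) (by omega) hv2
          have hend : v (n₀ + p) i = v n₀ i + 1 := chain p hp le_rfl
          have hper : v n₀ i = v (n₀ + p) i := perShift n₀ (by omega) i hi
          rw [hend] at hper
          exact fin3_ne_succ _ hper
        -- find c in [n₀, n₀+p]
        have hwin : ∃ s₀, n₀ ≤ s₀ ∧ s₀ ≤ n₀ + p ∧ v s₀ i = c := by
          rcases fin3_all (v n₀ i) c with hc | hc | hc
          · exact ⟨n₀, le_rfl, by omega, hc.symm⟩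
          · exact ⟨n₀ + 1, by omega, by omega, by rw [ha1, hc]⟩
          · obtain ⟨s, h1, h2, h3⟩ := h2w
            exact ⟨s, h1, h2, by rw [h3, hc]⟩
        obtain ⟨s₀, hs₀1, hs₀2, hs₀3⟩ := hwin
        -- sliding window
        have slide : ∀ k : ℕ, ∃ s, N + k ≤ s ∧ s ≤ N + k + 2 * p ∧ v s i = c := by
          intro k
          induction k with
          | zero => exact ⟨s₀, by omega, by omega, hs₀3⟩
          | succ k ih =>
            obtain ⟨s, h1, h2, h3⟩ := ih
            by_cases hsk : N + k + 1 ≤ s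
            · exact ⟨s, hsk, by omega, h3⟩
            · have hs : s = N + k := by omega
              refine ⟨s + p, by omega, by omega, ?_⟩
              rw [← perShift s (by omega) i hi]
              exact h3
        obtain ⟨s, h1, h2, h3⟩ := slide (t - N)
        exact ⟨s, by omega, by omega, h3⟩
      -- propagation of non-frozenness
      have NFup : ∀ i, i + 1 ≤ l → (∃ n, N ≤ n ∧ v (n+1) i ≠ v n i) →
          ∃ n, N ≤ n ∧ v (n+1) (i+1) ≠ v n (i+1) := by
        intro i hi hNF
        by_contra hcon
        push_neg at hcon
        have hconst : ∀ n, N ≤ n → v n (i+1) = v N (i+1) := by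
          intro n hn
          induction n, hn using Nat.le_induction with
          | base => rfl
          | succ n hn ih => rw [hcon n hn, ih]
        rcases fin3_cases (v N (i+1)) with hc | hc | hc
        · obtain ⟨s, hs1, _, hs3⟩ := visMain i (by omega) hNF 1 N le_rfl
          have h := hvs s (i+1) hi
          rw [if_neg (Nat.succ_ne_zero i), show i+1-1 = i by omega, hs3,
            hconst s hs1, hc, fr_10] at h
          rw [hconst (s+1) (by omega), hc] at h
          exact absurd h (by decide)
        · obtain ⟨s, hs1, _, hs3⟩ := visMain i (by omega) hNF 2 N le_rfl
          have h := hvs s (i+1) hi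
          rw [if_neg (Nat.succ_ne_zero i), show i+1-1 = i by omega, hs3,
            hconst s hs1, hc, fr_21] at h
          rw [hconst (s+1) (by omega), hc] at h
          exact absurd h (by decide)
        · obtain ⟨s, hs1, _, hs3⟩ := visMain i (by omega) hNF 1 N le_rfl
          have h := hvs s (i+1) hi
          rw [if_neg (Nat.succ_ne_zero i), show i+1-1 = i by omega, hs3,
            hconst s hs1, hc, fr_12] at h
          rw [hconst (s+1) (by omega), hc] at h
          exact absurd h (by decide)
      have NFdown : ∀ k, k + 1 ≤ l → (∃ n, N ≤ n ∧ v (n+1) (k+1) ≠ v n (k+1)) →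
          ∃ n, N ≤ n ∧ v (n+1) k ≠ v n k := by
        intro k hk hNF
        by_contra hcon
        push_neg at hcon
        have hconst : ∀ n, N ≤ n → v n k = v N k := by
          intro n hn
          induction n, hn using Nat.le_induction with
          | base => rfl
          | succ n hn ih => rw [hcon n hn, ih]
        rcases fin3_cases (v N k) with hc | hc | hc
        · obtain ⟨s, hs1, _, hs3⟩ := visMain (k+1) hk hNF 1 N le_rfl
          have h := hvs s k (by omega)
          rw [if_neg (by omega : k ≠ l), hs3, hconst s hs1, hc, fr01] at h
          rw [hconst (s+1) (by omega), hc] at h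
          exact absurd h (by decide)
        · obtain ⟨s, hs1, _, hs3⟩ := visMain (k+1) hk hNF 2 N le_rfl
          have h := hvs s k (by omega)
          rw [if_neg (by omega : k ≠ l), hs3, hconst s hs1, hc, fr_x12] at h
          rw [hconst (s+1) (by omega), hc] at h
          exact absurd h (by decide)
        · obtain ⟨s, hs1, _, hs3⟩ := visMain (k+1) hk hNF 1 N le_rfl
          have h := hvs s k (by omega)
          rw [if_neg (by omega : k ≠ l), hs3, hconst s hs1, hc, fr_x21] at h
          rw [hconst (s+1) (by omega), hc] at h
          exact absurd h (by decide)
      -- all cells are non-frozen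
      have allNF : ∀ i, i ≤ l → ∃ n, N ≤ n ∧ v (n+1) i ≠ v n i := by
        have up : ∀ d, i₀ + d ≤ l → ∃ n, N ≤ n ∧ v (n+1) (i₀+d) ≠ v n (i₀+d) := by
          intro d
          induction d with
          | zero => intro _; exact ⟨n₁₀, hn₁₀, hne₁₀⟩
          | succ d ih =>
            intro hd
            have h := NFup (i₀ + d) (by omega) (ih (by omega))
            rwa [show i₀ + d + 1 = i₀ + (d+1) by omega] at h
        have down : ∀ d, d ≤ i₀ → ∃ n, N ≤ n ∧ v (n+1) (i₀ - d) ≠ v n (i₀ - d) := by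
          intro d
          induction d with
          | zero => intro _; exact ⟨n₁₀, hn₁₀, hne₁₀⟩
          | succ d ih =>
            intro hd
            have he : i₀ - d = (i₀ - (d+1)) + 1 := by omega
            have h := ih (by omega)
            rw [he] at h
            exact NFdown (i₀ - (d+1)) (by omega) h
        intro i hil
        rcases le_or_gt i₀ i with h | h
        · have := up (i - i₀) (by omega)
          rwa [show i₀ + (i - i₀) = i by omega] at this
        · have := down (i₀ - i) (by omega)
          rwa [show i₀ - (i₀ - i) = i by omega] at this
      have visAll : ∀ i, i ≤ l → ∀ c : Fin 3, ∀ t, N ≤ t →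
          ∃ s, t ≤ s ∧ s ≤ t + 2 * p ∧ v s i = c :=
        fun i hi => visMain i hi (allNF i hi)
      -- phase start extraction
      have phase : ∀ i, i ≤ l → ∀ t r₀ : ℕ, r₀ < t →
          (∃ r, r₀ ≤ r ∧ r < t ∧ v r i ≠ 2) → v t i = 2 →
          ∃ s, r₀ ≤ s ∧ s + 1 ≤ t ∧ v s i = 1 ∧
            (∀ r', s + 1 ≤ r' → r' ≤ t → v r' i = 2) := by
        intro i hi t r₀ hr₀t hex h2
        obtain ⟨r, hr₀, hrt, hrne⟩ := hex
        have hPs : v (Nat.findGreatest (fun r' => v r' i ≠ 2) (t - 1)) i ≠ 2 :=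
          Nat.findGreatest_spec (P := fun r' => v r' i ≠ 2) (n := t - 1) (m := r)
            (by omega) hrne
        have hrs : r ≤ Nat.findGreatest (fun r' => v r' i ≠ 2) (t - 1) :=
          Nat.le_findGreatest (P := fun r' => v r' i ≠ 2) (n := t - 1)
            (by omega) hrne
        have hst : Nat.findGreatest (fun r' => v r' i ≠ 2) (t - 1) ≤ t - 1 :=
          Nat.findGreatest_le _
        set s := Nat.findGreatest (fun r' => v r' i ≠ 2) (t - 1) with hs_def
        have hmax : ∀ r', s + 1 ≤ r' → r' ≤ t → v r' i = 2 := by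
          intro r' h1' h2'
          by_cases hh : r' = t
          · rwa [hh]
          · by_contra hne
            have hlt : Nat.findGreatest (fun r' => v r' i ≠ 2) (t - 1) < r' := by
              rw [← hs_def]; omega
            exact (Nat.findGreatest_is_greatest hlt (by omega)) hne
        have h21 : v (s+1) i = 2 := hmax (s+1) le_rfl (by omega)
        have h1v : v s i = 1 := by
          rcases incr s i hi with h | h
          · rw [h] at h21; exact absurd h21 hPs
          · rw [h] at h21; exact fin3_pred2 _ h21
        exact ⟨s, by omega, by omega, h1v, hmax⟩
      -- main induction: late 2's force a 0 to the right
      have P : ∀ i, i ≤ l → ∀ t, N + (i+1) * (2*p+1) ≤ t → v t i = 2 →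
          i < l ∧ v t (i+1) = 0 := by
        intro i
        induction i with
        | zero =>
          intro hi t ht h2
          have ht' : N + (2*p+1) ≤ t := by omega
          obtain ⟨r, hr1, hr2, hr3⟩ := visAll 0 hi 1 (t - (2*p+1)) (by omega)
          obtain ⟨s, hs₀, hst, h1v, hmax⟩ := phase 0 hi t N (by omega)
            ⟨r, by omega, by omega, by rw [hr3]; decide⟩ h2
          have h21 : v (s+1) 0 = 2 := hmax (s+1) le_rfl (by omega)
          have hstep0 := hvs s 0 hi
          rw [if_pos rfl, h1v] at hstep0
          rcases fr_wit 1 (if 0 = l then 0 else v s 1) (by rw [← hstep0]; exact h21)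
            with hx | hz
          · exact absurd hx (by decide)
          · by_cases hl : (0:ℕ) = l
            · rw [if_pos hl] at hz; exact absurd hz (by decide)
            · rw [if_neg hl] at hz
              have hlt : 0 < l := by omega
              have conc : v (s+1) 1 = 0 := by
                have h := hvs s 1 (by omega)
                rw [if_neg (by omega : (1:ℕ) ≠ 0), show (1:ℕ)-1 = 0 by omega,
                  h1v, hz] at h
                rw [h]; exact fr_12 _
              by_cases htt : t = s + 1
              · exact ⟨hlt, htt ▸ conc⟩
              · exfalso
                have h22 : v (s+2) 0 = 2 := hmax (s+2) (by omega) (by omega)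
                have h := hvs (s+1) 0 hi
                rw [if_pos rfl, h21, fr_12] at h
                rw [h22] at h
                exact absurd h (by decide)
        | succ k ih =>
          intro hi t ht h2
          have hk : k ≤ l := by omega
          have hT : (k+1+1) * (2*p+1) = (k+1) * (2*p+1) + (2*p+1) := by ring
          obtain ⟨r, hr1, hr2, hr3⟩ := visAll (k+1) hi 1 (t - (2*p+1)) (by omega)
          obtain ⟨s, hs₀, hst, h1v, hmax⟩ := phase (k+1) hi t (N + (k+1) * (2*p+1))
            (by omega) ⟨r, by omega, by omega, by rw [hr3]; decide⟩ h2
          have h21 : v (s+1) (k+1) = 2 := hmax (s+1) le_rfl (by omega)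
          have hstep0 := hvs s (k+1) hi
          rw [if_neg (Nat.succ_ne_zero k), show k+1-1 = k by omega, h1v] at hstep0
          rcases fr_wit (v s k) (if k+1 = l then 0 else v s (k+1+1))
            (by rw [← hstep0]; exact h21) with hx | hz
          · have h0 := (ih hk s (by omega) hx).2
            rw [h1v] at h0
            exact absurd h0 (by decide)
          · by_cases hl : k + 1 = l
            · rw [if_pos hl] at hz; exact absurd hz (by decide)
            · rw [if_neg hl] at hz
              have hkl : k + 1 < l := by omega
              have conc : v (s+1) (k+1+1) = 0 := by
                have h := hvs s (k+1+1) (by omega)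
                rw [if_neg (by omega : k+1+1 ≠ 0), show k+1+1-1 = k+1 by omega,
                  h1v, hz] at h
                rw [h]; exact fr_12 _
              by_cases htt : t = s + 1
              · exact ⟨hkl, htt ▸ conc⟩
              · exfalso
                have h22 : v (s+2) (k+1) = 2 := hmax (s+2) (by omega) (by omega)
                have h := hvs (s+1) (k+1) hi
                rw [if_neg (Nat.succ_ne_zero k), show k+1-1 = k by omega, h21,
                  if_neg hl, conc] at h
                rcases fin3_cases (v (s+1) k) with hc | hc | hc
                · rcases incr s k hk with e | e
                  · have hvsk : v s k = 0 := by rw [← e, hc]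
                    have h' := hvs s k hk
                    rw [hvsk, if_neg (by omega : k ≠ l), h1v, fr01] at h'
                    rw [hc] at h'
                    exact absurd h' (by decide)
                  · have hvs2 : v s k = 2 := by
                      apply fin3_pred0
                      rw [← e, hc]
                    have h0 := (ih hk s (by omega) hvs2).2
                    rw [h1v] at h0
                    exact absurd h0 (by decide)
                · rw [hc, fr_12] at h
                  rw [h22] at h
                  exact absurd h (by decide)
                · have h0 := (ih hk (s+1) (by omega) hc).2
                  rw [h21] at h0
                  exact absurd h0 (by decide)
      -- final contradiction at the right end
      obtain ⟨s₂, hs₂1, _, hs₂3⟩ := visAll l le_rfl 2 (N + (l+1) * (2*p+1))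
        (Nat.le_add_right _ _)
      exact absurd (P l le_rfl s₂ hs₂1 hs₂3).1 (lt_irrefl l)
  -- pigeonhole: some state repeats
  obtain ⟨a, b, hab, hfeq⟩ := Finite.exists_ne_map_eq_of_infinite
    (f := fun n : ℕ => (fun j : Fin (l+1) => v n (j : ℕ)))
  have hpt : ∀ x y : ℕ,
      (fun j : Fin (l+1) => v x (j : ℕ)) = (fun j : Fin (l+1) => v y (j : ℕ)) →
      ∀ j, j ≤ l → v x j = v y j := by
    intro x y hxy j hj
    have := congrFun hxy ⟨j, by omega⟩
    simpa using this
  rcases Nat.lt_or_ge a b with h | h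
  · exact key a b h (hpt a b hfeq)
  · exact key b a (by omega) (hpt b a hfeq.symm)
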